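/- arXiv:2207.00543 — 3 statements merged into one kernel-verified Lean document; each statement's English description precedes it below -/
import Mathlib

section
/- Let K, L be positive even integers with L² < K, and let k be an even integer with K − L² ≤ k ≤ K + L². Then i^k · h(k) = ∏_{ℓ=0}^{|K−k|/2 − 1} ((L² − |K−k|)/2 + 1 + ℓ)/(L²/2 + 1 + ℓ) · ∏_{j=0}^{L²} (K − L²/2 − 1 + j)/((K − L² + k)/2 − 1 + j), where h(k) = i^{-k} · Γ(L²/2+1)² Γ(K+L²/2) Γ((K−L²+k)/2 − 1) / [Γ(K−L²/2−1) Γ((L²−K+k)/2 + 1) Γ((K+L²+k)/2) Γ((K+L²−k)/2 + 1)]. In particular, i^k · h(k) > 0 for all even k in this range. -/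
/-!
Both products telescope into ratios of Gamma values, since `∏_{ℓ<n} (x + ℓ) = Γ(x + n) / Γ(x)`
for `x > 0`. The first product becomes `Γ(L²/2+1)² / (Γ((L²−|K−k|)/2+1) Γ((L²+|K−k|)/2+1))`, whose
denominator is symmetric in the sign of `K − k`; the second becomes the remaining Gamma quotient of
`h(k)`. Positivity is read off the products: `K − L²` is even and positive, hence at least `2`, so
every factor is a quotient of positive numbers.
-/

open Real Complex Finset

namespace Real

theorem prod_range_add_eq_Gamma_div {x : ℝ} (hx : 0 < x) (n : ℕ) :
    ∏ ℓ ∈ range n, (x + ℓ) = Gamma (x + n) / Gamma x := by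
  induction n with
  | zero => simp [div_self (Gamma_pos_of_pos hx).ne']
  | succ n ih =>
    rw [prod_range_succ, ih, Nat.cast_succ, ← add_assoc, Gamma_add_one (by positivity)]
    ring

theorem prod_range_add_div_add_eq_Gamma {x y : ℝ} (hx : 0 < x) (hy : 0 < y) (n : ℕ) :
    ∏ ℓ ∈ range n, (x + ℓ) / (y + ℓ) = Gamma (x + n) * Gamma y / (Gamma x * Gamma (y + n)) := by
  rw [prod_div_distrib, prod_range_add_eq_Gamma_div hx, prod_range_add_eq_Gamma_div hy,
    div_div_div_eq]

theorem prod_range_sub_abs_div_eq_Gamma_sq_div {s d : ℝ} {m : ℕ} (hm : (m : ℝ) = |d| / 2)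
    (hd : |d| ≤ s) :
    ∏ ℓ ∈ range m, ((s - |d|) / 2 + 1 + ℓ) / (s / 2 + 1 + ℓ) =
      Gamma (s / 2 + 1) ^ 2 / (Gamma ((s - d) / 2 + 1) * Gamma ((s + d) / 2 + 1)) := by
  rw [prod_range_add_div_add_eq_Gamma (by linarith) (by linarith [abs_nonneg d]), hm]
  rcases abs_choice d with h | h <;> rw [h] <;> ring_nf

end Real

theorem prod_range_add_div_add_pos {x y : ℝ} (hx : 0 < x) (hy : 0 < y) (n : ℕ) :
    0 < ∏ ℓ ∈ range n, (x + ℓ) / (y + ℓ) :=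
  prod_pos fun ℓ _ => div_pos (by positivity) (by positivity)

theorem Int.cast_natAbs_div_two_of_even {d : ℤ} (hd : Even d) :
    ((d.natAbs / 2 : ℕ) : ℝ) = |(d : ℝ)| / 2 := by
  obtain ⟨r, rfl⟩ := hd
  rw [show (r + r).natAbs / 2 = r.natAbs by omega, Nat.cast_natAbs, Int.cast_abs, Int.cast_add,
    ← two_mul, abs_mul, abs_two]
  ring

theorem stmt_1_general (K L : ℕ) (hKe : Even K) (hLe : Even L)
    (hLK : (L : ℤ) ^ 2 < K)
    (h : ℤ → ℂ)
    (hdef : ∀ k : ℤ, h k =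
      Complex.I ^ (-k) *
        ((Real.Gamma ((L : ℝ) ^ 2 / 2 + 1) ^ 2 * Real.Gamma ((K : ℝ) + (L : ℝ) ^ 2 / 2) *
            Real.Gamma (((K : ℝ) - (L : ℝ) ^ 2 + (k : ℝ)) / 2 - 1)) /
          (Real.Gamma ((K : ℝ) - (L : ℝ) ^ 2 / 2 - 1) *
            Real.Gamma (((L : ℝ) ^ 2 - (K : ℝ) + (k : ℝ)) / 2 + 1) *
            Real.Gamma (((K : ℝ) + (L : ℝ) ^ 2 + (k : ℝ)) / 2) *
            Real.Gamma (((K : ℝ) + (L : ℝ) ^ 2 - (k : ℝ)) / 2 + 1)) : ℝ))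
    (k : ℤ) (hke : Even k) (h1 : (K : ℤ) - (L : ℤ) ^ 2 ≤ k) (h2 : k ≤ (K : ℤ) + (L : ℤ) ^ 2) :
    Complex.I ^ k * h k =
      ((∏ ℓ ∈ Finset.range (((K : ℤ) - k).natAbs / 2),
          (((L : ℝ) ^ 2 - |(K : ℝ) - (k : ℝ)|) / 2 + 1 + (ℓ : ℝ)) /
            ((L : ℝ) ^ 2 / 2 + 1 + (ℓ : ℝ))) *
        (∏ j ∈ Finset.range (L ^ 2 + 1),
          ((K : ℝ) - (L : ℝ) ^ 2 / 2 - 1 + (j : ℝ)) /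
            (((K : ℝ) - (L : ℝ) ^ 2 + (k : ℝ)) / 2 - 1 + (j : ℝ))) : ℝ) ∧
    0 < (∏ ℓ ∈ Finset.range (((K : ℤ) - k).natAbs / 2),
          (((L : ℝ) ^ 2 - |(K : ℝ) - (k : ℝ)|) / 2 + 1 + (ℓ : ℝ)) /
            ((L : ℝ) ^ 2 / 2 + 1 + (ℓ : ℝ))) *
        (∏ j ∈ Finset.range (L ^ 2 + 1),
          ((K : ℝ) - (L : ℝ) ^ 2 / 2 - 1 + (j : ℝ)) /
            (((K : ℝ) - (L : ℝ) ^ 2 + (k : ℝ)) / 2 - 1 + (j : ℝ))) := by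
  have hKe' : Even (K : ℤ) := (Int.even_coe_nat K).2 hKe
  have hgap : (2 : ℝ) ≤ K - L ^ 2 := by
    obtain ⟨r, hr⟩ := hKe'.sub (Int.even_pow.2 ⟨(Int.even_coe_nat L).2 hLe, two_ne_zero⟩)
    exact_mod_cast (show (2 : ℤ) ≤ K - L ^ 2 by omega)
  have hk1 : (K : ℝ) - L ^ 2 ≤ k := by exact_mod_cast h1
  have hk2 : (k : ℝ) ≤ K + L ^ 2 := by exact_mod_cast h2
  have hdist : |(K : ℝ) - k| ≤ L ^ 2 := abs_sub_le_iff.2 ⟨by linarith, by linarith⟩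
  have hm : ((((K : ℤ) - k).natAbs / 2 : ℕ) : ℝ) = |(K : ℝ) - k| / 2 := by
    exact_mod_cast Int.cast_natAbs_div_two_of_even (hKe'.sub hke)
  have hfirst := prod_range_sub_abs_div_eq_Gamma_sq_div hm hdist
  have hsecond := prod_range_add_div_add_eq_Gamma (x := (K : ℝ) - L ^ 2 / 2 - 1)
    (y := ((K : ℝ) - L ^ 2 + k) / 2 - 1) (by linarith) (by linarith) (L ^ 2 + 1)
  refine ⟨?_, mul_pos ?_ (prod_range_add_div_add_pos (by linarith) (by linarith) _)⟩
  · rw [hdef, ← mul_assoc, ← zpow_add₀ I_ne_zero, add_neg_cancel, zpow_zero, one_mul, hfirst,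
      hsecond]
    congr 1
    push_cast
    ring_nf
  · exact prod_range_add_div_add_pos (by linarith) (by positivity) _

/-- For even `k` with `K - L² ≤ k ≤ K + L²` (and `L² < K`), the test function satisfies
`i^k · h(k) = ∏_{ℓ=0}^{|K−k|/2 − 1} ((L²−|K−k|)/2+1+ℓ)/(L²/2+1+ℓ)
  · ∏_{j=0}^{L²} (K−L²/2−1+j)/((K−L²+k)/2−1+j)`, and in particular `i^k · h(k) > 0`. -/
theorem stmt_1 (K L : ℕ) (hK : 0 < K) (hL : 0 < L) (hKe : Even K) (hLe : Even L)
    (hLK : (L : ℤ) ^ 2 < K)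
    (h : ℤ → ℂ)
    (hdef : ∀ k : ℤ, h k =
      Complex.I ^ (-k) *
        ((Real.Gamma ((L : ℝ) ^ 2 / 2 + 1) ^ 2 * Real.Gamma ((K : ℝ) + (L : ℝ) ^ 2 / 2) *
            Real.Gamma (((K : ℝ) - (L : ℝ) ^ 2 + (k : ℝ)) / 2 - 1)) /
          (Real.Gamma ((K : ℝ) - (L : ℝ) ^ 2 / 2 - 1) *
            Real.Gamma (((L : ℝ) ^ 2 - (K : ℝ) + (k : ℝ)) / 2 + 1) *
            Real.Gamma (((K : ℝ) + (L : ℝ) ^ 2 + (k : ℝ)) / 2) *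
            Real.Gamma (((K : ℝ) + (L : ℝ) ^ 2 - (k : ℝ)) / 2 + 1)) : ℝ))
    (k : ℤ) (hke : Even k) (h1 : (K : ℤ) - (L : ℤ) ^ 2 ≤ k) (h2 : k ≤ (K : ℤ) + (L : ℤ) ^ 2) :
    Complex.I ^ k * h k =
      ((∏ ℓ ∈ Finset.range (((K : ℤ) - k).natAbs / 2),
          (((L : ℝ) ^ 2 - |(K : ℝ) - (k : ℝ)|) / 2 + 1 + (ℓ : ℝ)) /
            ((L : ℝ) ^ 2 / 2 + 1 + (ℓ : ℝ))) *
        (∏ j ∈ Finset.range (L ^ 2 + 1),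
          ((K : ℝ) - (L : ℝ) ^ 2 / 2 - 1 + (j : ℝ)) /
            (((K : ℝ) - (L : ℝ) ^ 2 + (k : ℝ)) / 2 - 1 + (j : ℝ))) : ℝ) ∧
    0 < (∏ ℓ ∈ Finset.range (((K : ℤ) - k).natAbs / 2),
          (((L : ℝ) ^ 2 - |(K : ℝ) - (k : ℝ)|) / 2 + 1 + (ℓ : ℝ)) /
            ((L : ℝ) ^ 2 / 2 + 1 + (ℓ : ℝ))) *
        (∏ j ∈ Finset.range (L ^ 2 + 1),
          ((K : ℝ) - (L : ℝ) ^ 2 / 2 - 1 + (j : ℝ)) /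
            (((K : ℝ) - (L : ℝ) ^ 2 + (k : ℝ)) / 2 - 1 + (j : ℝ))) :=
  stmt_1_general K L hKe hLe hLK h hdef k hke h1 h2
end

section
/- Let T ≥ 2 and let M : 2ℕ → ℝ≥0 be any nonnegative function on the even natural numbers, and let V > 0. Suppose L is a positive even integer. Then Σ*_{T ≤ k ≤ 2T, k even, V ≤ M(k) ≤ 2V} M(k)² ≤ (8/L) · Σ_{T ≤ K ≤ 2T, K even} ( Σ_{K−L ≤ k ≤ K+L, k even, V ≤ M(k) ≤ 2V} M(k) )², provided that for every even K with T ≤ K ≤ 2T the inner short sum is either zero or at least V, and 4 ≤ L ≤ T. -/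
open Finset

/-- Double-counting swap: if every `k ∈ A` lies in `C K` for at least `n/4` of the `K ∈ B`
(in the form `n ≤ 4 * card`), then `n * ∑_A M ≤ 4 * ∑_B ∑_{C K} M`. -/
lemma stmt_3_swap (A B : Finset ℕ) (C : ℕ → Finset ℕ) (M : ℕ → ℝ) (hM : ∀ k, 0 ≤ M k)
    (n : ℕ)
    (hcard : ∀ k ∈ A, n ≤ 4 * ((B.filter (fun K => k ∈ C K)).card)) :
    (n : ℝ) * ∑ k ∈ A, M k ≤ 4 * ∑ K ∈ B, ∑ k ∈ C K, M k := by
  classical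
  calc (n : ℝ) * ∑ k ∈ A, M k = ∑ k ∈ A, (n : ℝ) * M k := by rw [Finset.mul_sum]
    _ ≤ ∑ k ∈ A, 4 * (((B.filter (fun K => k ∈ C K)).card : ℝ) * M k) := by
        apply Finset.sum_le_sum
        intro k hk
        have h := hcard k hk
        have h' : (n : ℝ) ≤ 4 * ((B.filter (fun K => k ∈ C K)).card : ℝ) := by
          exact_mod_cast h
        nlinarith [hM k]
    _ = 4 * ∑ k ∈ A, ∑ K ∈ B, (if k ∈ C K then M k else 0) := by
        rw [← Finset.mul_sum]
        congr 1
        apply Finset.sum_congr rfl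
        intro k _
        rw [← Finset.sum_filter, Finset.sum_const, nsmul_eq_mul]
    _ = 4 * ∑ K ∈ B, ∑ k ∈ A, (if k ∈ C K then M k else 0) := by rw [Finset.sum_comm]
    _ ≤ 4 * ∑ K ∈ B, ∑ k ∈ C K, M k := by
        have key : ∀ K ∈ B, (∑ k ∈ A, (if k ∈ C K then M k else 0)) ≤ ∑ k ∈ C K, M k := by
          intro K _
          rw [Finset.sum_ite_mem]
          exact Finset.sum_le_sum_of_subset_of_nonneg Finset.inter_subset_right
            (fun i _ _ => hM i)
        have := Finset.sum_le_sum key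
        linarith

/-- The reduction from a dyadic-interval second moment of large values of `M` to a mean
square of short-interval sums. All sums range over even integers. -/
theorem stmt_3 (T L : ℕ) (hT : 2 ≤ T) (hLe : Even L) (hL4 : 4 ≤ L) (hLT : L ≤ T)
    (M : ℕ → ℝ) (hM : ∀ k, 0 ≤ M k) (V : ℝ) (hV : 0 < V)
    (hshort : ∀ K ∈ (Finset.Icc T (2 * T)).filter (fun K => Even K),
      (∑ k ∈ (Finset.Icc (K - L) (K + L)).filter
          (fun k => Even k ∧ V ≤ M k ∧ M k ≤ 2 * V), M k) = 0 ∨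
      V ≤ ∑ k ∈ (Finset.Icc (K - L) (K + L)).filter
          (fun k => Even k ∧ V ≤ M k ∧ M k ≤ 2 * V), M k) :
    ∑ k ∈ (Finset.Icc T (2 * T)).filter
        (fun k => Even k ∧ V ≤ M k ∧ M k ≤ 2 * V), (M k) ^ 2 ≤
      (8 / (L : ℝ)) * ∑ K ∈ (Finset.Icc T (2 * T)).filter (fun K => Even K),
        (∑ k ∈ (Finset.Icc (K - L) (K + L)).filter
            (fun k => Even k ∧ V ≤ M k ∧ M k ≤ 2 * V), M k) ^ 2 := by
  classical
  set A : Finset ℕ := (Finset.Icc T (2 * T)).filter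
      (fun k => Even k ∧ V ≤ M k ∧ M k ≤ 2 * V) with hAdef
  set B : Finset ℕ := (Finset.Icc T (2 * T)).filter (fun K => Even K) with hBdef
  have hC : ∀ K : ℕ, (Finset.Icc (K - L) (K + L)).filter
      (fun k => Even k ∧ V ≤ M k ∧ M k ≤ 2 * V) =
      (fun K => (Finset.Icc (K - L) (K + L)).filter
      (fun k => Even k ∧ V ≤ M k ∧ M k ≤ 2 * V)) K := fun _ => rfl
  set C : ℕ → Finset ℕ := fun K => (Finset.Icc (K - L) (K + L)).filter
      (fun k => Even k ∧ V ≤ M k ∧ M k ≤ 2 * V) with hCdef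
  -- Step 1: second moment bounded by first moment
  have step1 : ∑ k ∈ A, (M k) ^ 2 ≤ 2 * V * ∑ k ∈ A, M k := by
    rw [Finset.mul_sum]
    apply Finset.sum_le_sum
    intro k hk
    obtain ⟨-, -, h1, h2⟩ := Finset.mem_filter.mp hk
    nlinarith [hM k]
  -- Step 2: counting bound
  have hcard : ∀ k ∈ A, L ≤ 4 * ((B.filter (fun K => k ∈ C K)).card) := by
    intro k hk
    obtain ⟨hk1, hk2⟩ := Finset.mem_filter.mp hk
    rw [Finset.mem_Icc] at hk1
    set c : ℕ := (max T (k - L) + 1) / 2 with hcdef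
    set d : ℕ := (min (2 * T) (k + L)) / 2 with hddef
    have hsub : (Finset.Icc c d).image (fun j => 2 * j) ⊆
        B.filter (fun K => k ∈ C K) := by
      intro K hK
      simp only [Finset.mem_image, Finset.mem_Icc] at hK
      obtain ⟨j, ⟨hj1, hj2⟩, rfl⟩ := hK
      have hb : T ≤ 2 * j ∧ 2 * j ≤ 2 * T ∧ 2 * j - L ≤ k ∧ k ≤ 2 * j + L := by omega
      refine Finset.mem_filter.mpr ⟨Finset.mem_filter.mpr
        ⟨Finset.mem_Icc.mpr ⟨hb.1, hb.2.1⟩, even_two_mul j⟩, ?_⟩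
      exact Finset.mem_filter.mpr ⟨Finset.mem_Icc.mpr ⟨hb.2.2.1, hb.2.2.2⟩, hk2⟩
    have h1 := Finset.card_le_card hsub
    rw [Finset.card_image_of_injective _ (fun a b h => by omega), Nat.card_Icc] at h1
    omega
  have step2 : (L : ℝ) * ∑ k ∈ A, M k ≤ 4 * ∑ K ∈ B, ∑ k ∈ C K, M k :=
    stmt_3_swap A B C M hM L hcard
  -- Step 3: large-values dichotomy
  have step3 : V * ∑ K ∈ B, ∑ k ∈ C K, M k ≤ ∑ K ∈ B, (∑ k ∈ C K, M k) ^ 2 := by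
    rw [Finset.mul_sum]
    apply Finset.sum_le_sum
    intro K hK
    rcases hshort K hK with h | h
    · rw [hC K] at h
      rw [h]; simp
    · rw [hC K] at h
      have h0 : (0 : ℝ) ≤ ∑ k ∈ C K, M k := le_trans hV.le h
      nlinarith
  -- Combine
  have hL0 : (0 : ℝ) < (L : ℝ) := by exact_mod_cast (by omega : 0 < L)
  have hx : (0 : ℝ) ≤ ∑ k ∈ A, M k := Finset.sum_nonneg (fun i _ => hM i)
  rw [div_mul_eq_mul_div, le_div_iff₀ hL0]
  have p1 := mul_le_mul_of_nonneg_right step1 hL0.le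
  have p2 := mul_le_mul_of_nonneg_left step2 (by linarith : (0 : ℝ) ≤ 2 * V)
  linarith [p1, p2, step3]
end

section
/- Let K, L be positive integers with L² ≤ K^{1/2}, and consider F(σ, τ) = Re log [ Γ((K−L²+σ+iτ−1)/2) / Γ((K+L²−σ−iτ+1)/2) ] for fixed bounded σ and |τ| ≤ K/L. Then F(σ, τ) = (L² − σ + 1)·(−log(K/2) + o(1)) + O(1) + error terms, and in particular the Mellin transform Ĥ(s) defined by Ĥ(σ+iτ) = (2π)^{−σ−iτ−1} · [Γ(L²/2+1)² Γ(K+L²/2)] / [Γ(L²+1) Γ(K−L²/2−1)] · Γ((K−L²+σ+iτ−1)/2)/Γ((K+L²−σ−iτ+1)/2) satisfies |Ĥ(σ+iτ)| ≤ C(σ) · K^σ · L for |τ| ≤ K/L and K sufficiently large. -/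
open Real Complex intervalIntegral

/-- Key lemma: `|Γ(z)| * Γ(x+a) ≤ Γ(x) * |Γ(z+a)|` for `x = Re z > 0`, `a > 0`. -/
lemma abs_Gamma_mul_le (z : ℂ) (hx : 0 < z.re) (a : ℝ) (ha : 0 < a) :
    ‖Complex.Gamma z‖ * Real.Gamma (z.re + a) ≤
      Real.Gamma z.re * ‖Complex.Gamma (z + a)‖ := by
  set x := z.re
  have hg : Complex.Gamma z * Complex.Gamma (a : ℂ) =
      Complex.Gamma (z + a) * Complex.betaIntegral z a :=
    Complex.Gamma_mul_Gamma_eq_betaIntegral hx (by simpa using ha)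
  set g : ℝ → ℝ := fun t => t ^ (x - 1) * (1 - t) ^ (a - 1) with hgdef
  have hbeta_real : Complex.betaIntegral (x : ℂ) (a : ℂ) = ((∫ t in (0:ℝ)..1, g t : ℝ) : ℂ) := by
    rw [Complex.betaIntegral, ← intervalIntegral.integral_ofReal]
    refine intervalIntegral.integral_congr_ae (Filter.Eventually.of_forall fun t ht => ?_)
    rw [Set.uIoc_of_le (by norm_num : (0:ℝ) ≤ 1)] at ht
    have h0t : 0 ≤ t := le_of_lt ht.1
    have h1t : 0 ≤ 1 - t := by linarith [ht.2]
    show (t:ℂ) ^ ((x:ℂ) - 1) * (1 - (t:ℂ)) ^ ((a:ℂ) - 1) = ((g t : ℝ) : ℂ)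
    rw [hgdef]
    push_cast
    rw [Complex.ofReal_cpow h0t, Complex.ofReal_cpow h1t]
    push_cast
    ring
  have hreal : Real.Gamma x * Real.Gamma a =
      Real.Gamma (x + a) * ∫ t in (0:ℝ)..1, g t := by
    have := Complex.Gamma_mul_Gamma_eq_betaIntegral
      (s := (x:ℂ)) (t := (a:ℂ)) (by simpa using hx) (by simpa using ha)
    rw [hbeta_real] at this
    rw [← Complex.ofReal_inj]
    simpa [Complex.Gamma_ofReal, ← Complex.ofReal_add] using this
  have hbound : ‖Complex.betaIntegral z a‖ ≤ ∫ t in (0:ℝ)..1, g t := by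
    have h1 : ‖Complex.betaIntegral z a‖ ≤
        ∫ t in (0:ℝ)..1, ‖(t : ℂ) ^ (z - 1) * (1 - (t:ℂ)) ^ ((a:ℂ) - 1)‖ := by
      simpa [Complex.betaIntegral] using
        intervalIntegral.norm_integral_le_integral_norm
          (f := fun t : ℝ => (t : ℂ) ^ (z - 1) * (1 - (t:ℂ)) ^ ((a:ℂ) - 1)) (by norm_num : (0:ℝ) ≤ 1)
    refine h1.trans (le_of_eq ?_)
    refine intervalIntegral.integral_congr_ae (Filter.Eventually.of_forall fun t ht => ?_)
    rw [Set.uIoc_of_le (by norm_num : (0:ℝ) ≤ 1)] at ht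
    have h0t : 0 < t := ht.1
    have h1t : 0 ≤ 1 - t := by linarith [ht.2]
    have e1 : ‖(t : ℂ) ^ (z - 1)‖ = t ^ (x - 1) := by
      rw [Complex.norm_cpow_eq_rpow_re_of_pos h0t]
      simp [x]
    have e2 : ‖(1 - (t:ℂ)) ^ ((a:ℂ) - 1)‖ = (1 - t) ^ (a - 1) := by
      have h' : (1 - (t:ℂ)) = ((1 - t : ℝ) : ℂ) := by push_cast; ring
      rw [h', show ((a:ℂ) - 1) = ((a - 1 : ℝ) : ℂ) by push_cast; ring,
        ← Complex.ofReal_cpow h1t]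
      simp only [Complex.norm_real, Real.norm_eq_abs]
      exact _root_.abs_of_nonneg (Real.rpow_nonneg h1t _)
    rw [norm_mul, e1, e2, hgdef]
  have hGa : 0 < Real.Gamma a := Real.Gamma_pos_of_pos ha
  have hGx : 0 < Real.Gamma x := Real.Gamma_pos_of_pos hx
  have hGxa : 0 < Real.Gamma (x + a) := Real.Gamma_pos_of_pos (by linarith)
  have habs : ‖Complex.Gamma z‖ * Real.Gamma a =
      ‖Complex.Gamma (z + a)‖ * ‖Complex.betaIntegral z a‖ := by
    have := congrArg norm hg
    simpa [norm_mul, Complex.Gamma_ofReal, abs_of_pos hGa] using this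
  have hIb : (∫ t in (0:ℝ)..1, g t) = Real.Gamma x * Real.Gamma a / Real.Gamma (x + a) := by
    rw [eq_div_iff hGxa.ne']
    linarith [hreal]
  rw [hIb] at hbound
  have h2 : ‖Complex.Gamma z‖ * Real.Gamma a ≤
      ‖Complex.Gamma (z + a)‖ * (Real.Gamma x * Real.Gamma a / Real.Gamma (x + a)) := by
    rw [habs]
    exact mul_le_mul_of_nonneg_left hbound (norm_nonneg _)
  refine le_of_mul_le_mul_right ?_ hGa
  calc ‖Complex.Gamma z‖ * Real.Gamma (x + a) * Real.Gamma a
      = (‖Complex.Gamma z‖ * Real.Gamma a) * Real.Gamma (x + a) := by ring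
    _ ≤ (‖Complex.Gamma (z + a)‖ * (Real.Gamma x * Real.Gamma a / Real.Gamma (x + a)))
          * Real.Gamma (x + a) := mul_le_mul_of_nonneg_right h2 hGxa.le
    _ = Real.Gamma x * ‖Complex.Gamma (z + a)‖ * Real.Gamma a := by
        field_simp
open Real

/-- Log-convexity of Gamma: interpolation inequality. -/
lemma Gamma_interp (p q t : ℝ) (hp : 0 < p) (hq : 0 < q) (ht0 : 0 ≤ t) (ht1 : t ≤ 1) :
    Real.Gamma (t * p + (1 - t) * q) ≤ Real.Gamma p ^ t * Real.Gamma q ^ (1 - t) := by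
  have h := Real.convexOn_log_Gamma.2 (Set.mem_Ioi.mpr hp) (Set.mem_Ioi.mpr hq)
    ht0 (by linarith : (0:ℝ) ≤ 1 - t) (by ring)
  simp only [Function.comp_apply, smul_eq_mul] at h
  have hc : 0 < t * p + (1 - t) * q := by
    rcases le_total p q with hpq|hpq
    · nlinarith
    · nlinarith
  have hGp := Real.Gamma_pos_of_pos hp
  have hGq := Real.Gamma_pos_of_pos hq
  have hGc := Real.Gamma_pos_of_pos hc
  calc Real.Gamma (t * p + (1 - t) * q)
      = Real.exp (Real.log (Real.Gamma (t * p + (1 - t) * q))) := (Real.exp_log hGc).symm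
    _ ≤ Real.exp (t * Real.log (Real.Gamma p) + (1 - t) * Real.log (Real.Gamma q)) :=
        Real.exp_le_exp.mpr h
    _ = Real.Gamma p ^ t * Real.Gamma q ^ (1 - t) := by
        rw [Real.rpow_def_of_pos hGp, Real.rpow_def_of_pos hGq, ← Real.exp_add]
        ring_nf

/-- Gautschi-type lower bound: `Γ(x) * x^δ ≤ 2 * Γ(x+δ)` for `x ≥ 1`, `0 ≤ δ ≤ 1`. -/
lemma Gamma_gautschi_lower {x δ : ℝ} (hx : 1 ≤ x) (hδ0 : 0 ≤ δ) (hδ1 : δ ≤ 1) :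
    Real.Gamma x * x ^ δ ≤ 2 * Real.Gamma (x + δ) := by
  have hx0 : (0:ℝ) < x := by linarith
  have hxδ : (0:ℝ) < x + δ := by linarith
  have h := Gamma_interp (x + δ) (x + 1 + δ) δ hxδ (by linarith) hδ0 hδ1
  have hcomb : δ * (x + δ) + (1 - δ) * (x + 1 + δ) = x + 1 := by ring
  rw [hcomb] at h
  have hrec : Real.Gamma (x + 1 + δ) = (x + δ) * Real.Gamma (x + δ) := by
    rw [show x + 1 + δ = (x + δ) + 1 by ring, Real.Gamma_add_one hxδ.ne']
  rw [hrec] at h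
  have hGxδ := Real.Gamma_pos_of_pos hxδ
  have h2 : Real.Gamma (x + 1) ≤ Real.Gamma (x + δ) * (x + δ) ^ (1 - δ) := by
    calc Real.Gamma (x + 1) ≤ Real.Gamma (x+δ) ^ δ * ((x + δ) * Real.Gamma (x+δ)) ^ (1-δ) := h
      _ = Real.Gamma (x+δ) ^ δ * ((x+δ) ^ (1-δ) * Real.Gamma (x+δ) ^ (1-δ)) := by
          rw [Real.mul_rpow hxδ.le hGxδ.le]
      _ = (Real.Gamma (x+δ) ^ δ * Real.Gamma (x+δ) ^ (1-δ)) * (x+δ) ^ (1-δ) := by ring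
      _ = Real.Gamma (x + δ) * (x + δ) ^ (1 - δ) := by
          rw [← Real.rpow_add hGxδ]; norm_num
  rw [Real.Gamma_add_one hx0.ne'] at h2
  -- from x * Γ(x) ≤ Γ(x+δ) * (x+δ)^(1-δ), deduce Γ(x) * x^δ ≤ 2 Γ(x+δ)
  have key : x ^ (1 - δ) * (Real.Gamma x * x ^ δ) = x * Real.Gamma x := by
    rw [mul_comm (Real.Gamma x), ← mul_assoc, ← Real.rpow_add hx0]
    norm_num
  have hb : (x + δ) ^ (1 - δ) ≤ x ^ (1-δ) * 2 := by
    calc (x + δ) ^ (1-δ) = x ^ (1-δ) * ((x+δ)/x) ^ (1-δ) := by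
          rw [← Real.mul_rpow hx0.le (by positivity)]
          congr 1; field_simp
      _ ≤ x ^ (1-δ) * ((x+δ)/x) ^ (1:ℝ) := by
          refine mul_le_mul_of_nonneg_left ?_ (by positivity)
          refine Real.rpow_le_rpow_of_exponent_le ?_ (by linarith)
          rw [le_div_iff₀ hx0]; linarith
      _ ≤ x ^ (1-δ) * 2 := by
          refine mul_le_mul_of_nonneg_left ?_ (by positivity)
          rw [Real.rpow_one, div_le_iff₀ hx0]; linarith
  have h3 : x ^ (1-δ) * (Real.Gamma x * x ^ δ) ≤ Real.Gamma (x+δ) * (x ^ (1-δ) * 2) := by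
    rw [key]
    calc x * Real.Gamma x ≤ Real.Gamma (x+δ) * (x+δ)^(1-δ) := h2
      _ ≤ Real.Gamma (x+δ) * (x ^ (1-δ) * 2) := mul_le_mul_of_nonneg_left hb hGxδ.le
  have hxp : (0:ℝ) < x ^ (1-δ) := Real.rpow_pos_of_pos hx0 _
  nlinarith [hxp, Real.Gamma_pos_of_pos hxδ]

/-- `Γ(u+1) ≤ Γ(u+1/2) * √(u+1/2)` for `u > 0`. -/
lemma Gamma_half_upper {u : ℝ} (hu : 0 < u) :
    Real.Gamma (u + 1) ≤ Real.Gamma (u + 1/2) * Real.sqrt (u + 1/2) := by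
  have h1 : (0:ℝ) < u + 1/2 := by linarith
  have h2 : (0:ℝ) < u + 3/2 := by linarith
  have h := Gamma_interp (u + 1/2) (u + 3/2) (1/2) h1 h2 (by norm_num) (by norm_num)
  have hcomb : (1/2 : ℝ) * (u + 1/2) + (1 - 1/2) * (u + 3/2) = u + 1 := by ring
  rw [hcomb] at h
  have hrec : Real.Gamma (u + 3/2) = (u + 1/2) * Real.Gamma (u + 1/2) := by
    rw [show u + 3/2 = (u + 1/2) + 1 by ring, Real.Gamma_add_one h1.ne']
  have hG := Real.Gamma_pos_of_pos h1
  calc Real.Gamma (u+1) ≤ Real.Gamma (u+1/2) ^ (1/2:ℝ) * Real.Gamma (u+3/2) ^ (1-1/2:ℝ) := h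
    _ = Real.Gamma (u+1/2) ^ (1/2:ℝ) * ((u+1/2) * Real.Gamma (u+1/2)) ^ (1/2:ℝ) := by
        rw [hrec]; norm_num
    _ = Real.Gamma (u+1/2) * (u+1/2) ^ (1/2:ℝ) := by
        rw [Real.mul_rpow h1.le hG.le, ← mul_assoc, mul_comm (Real.Gamma (u+1/2) ^ (1/2:ℝ)),
          mul_assoc]
        rw [← Real.rpow_add hG]
        norm_num
        ring
    _ = Real.Gamma (u+1/2) * Real.sqrt (u+1/2) := by rw [Real.sqrt_eq_rpow]

/-- Gamma shifted by a natural number. -/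
lemma Gamma_nat_shift (t : ℝ) (ht : 0 < t) (N : ℕ) :
    Real.Gamma (t + N) = Real.Gamma t * ∏ j ∈ Finset.range N, (t + j) := by
  induction N with
  | zero => simp
  | succ n ih =>
    have h : t + (n+1 : ℕ) = (t + n) + 1 := by push_cast; ring
    rw [h, Real.Gamma_add_one (by positivity : (t + (n:ℝ)) ≠ 0), ih,
      Finset.prod_range_succ]
    ring

lemma Complex_Gamma_nat_shift (w : ℂ) (hw : 0 < w.re) (N : ℕ) :
    Complex.Gamma (w + N) = Complex.Gamma w * ∏ k ∈ Finset.range N, (w + k) := by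
  induction N with
  | zero => simp
  | succ n ih =>
    have h : w + (n+1 : ℕ) = (w + n) + 1 := by push_cast; ring
    have hne : w + (n:ℂ) ≠ 0 := by
      intro hc
      have : w.re + n = 0 := by
        have := congrArg Complex.re hc; simpa using this
      have : (0:ℝ) ≤ (n:ℝ) := Nat.cast_nonneg n
      linarith
    rw [h, Complex.Gamma_add_one _ hne, ih, Finset.prod_range_succ]
    ring

open Real Complex

set_option maxHeartbeats 2000000 in
/-- Bound for the Mellin transform `Ĥ(σ + iτ)` in the central range `|τ| ≤ K/L`: for fixed
bounded `σ`, `|Ĥ(σ+iτ)| ≤ C(σ) · K^σ · L` for `K` sufficiently large, where `L² ≤ K^{1/2}`. -/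
theorem stmt_9 (σ : ℝ) :
    ∃ C : ℝ, 0 < C ∧ ∃ K₀ : ℕ, ∀ (K L : ℕ), 0 < K → 0 < L →
      ((L : ℝ) ^ 2 ≤ (K : ℝ) ^ ((1 : ℝ) / 2)) → K₀ ≤ K →
      ∀ τ : ℝ, |τ| ≤ (K : ℝ) / (L : ℝ) →
      ‖
        ((2 * (π : ℂ)) ^ (-(σ + τ * Complex.I) - 1) *
          ((Real.Gamma ((L : ℝ) ^ 2 / 2 + 1) ^ 2 * Real.Gamma ((K : ℝ) + (L : ℝ) ^ 2 / 2)) /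
            (Real.Gamma ((L : ℝ) ^ 2 + 1) * Real.Gamma ((K : ℝ) - (L : ℝ) ^ 2 / 2 - 1)) : ℝ) *
          (Complex.Gamma (((K : ℂ) - (L : ℂ) ^ 2 + (σ + τ * Complex.I) - 1) / 2) /
            Complex.Gamma (((K : ℂ) + (L : ℂ) ^ 2 - (σ + τ * Complex.I) + 1) / 2)))‖ ≤
        C * (K : ℝ) ^ σ * (L : ℝ) := by
  set n : ℕ := ⌈σ⌉₊ with hn
  set c1 : ℝ := (2 * π) ^ (-σ - 1) with hc1
  set c3 : ℝ := max 1 ((49/100 : ℝ) ^ σ) with hc3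
  have hπ : (0:ℝ) < 2 * π := by positivity
  have hc1pos : 0 < c1 := Real.rpow_pos_of_pos hπ _
  have hc3pos : 0 < c3 := lt_of_lt_of_le one_pos (le_max_left _ _)
  refine ⟨c1 * Real.sqrt π * 4 * Real.exp 4 * 5 ^ n * c3, by positivity, ⌈(4*|σ|+100)^2⌉₊, ?_⟩
  intro K L hK hL hL2 hKK₀ τ hτ
  -- basic real quantities
  set M : ℝ := (L:ℝ)^2 with hMdef
  set m : ℕ := L^2 with hmdef
  have hMcast : ((m:ℕ):ℝ) = M := by push_cast [hmdef, hMdef]; ring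
  set S : ℝ := Real.sqrt K with hSdef
  have hK0 : (0:ℝ) ≤ K := Nat.cast_nonneg K
  have hS0 : 0 ≤ S := Real.sqrt_nonneg _
  have hS2 : S * S = K := Real.mul_self_sqrt hK0
  have hKR : ((4*|σ|+100)^2 : ℝ) ≤ K := by
    calc ((4*|σ|+100)^2 : ℝ) ≤ (⌈(4*|σ|+100)^2⌉₊ : ℝ) := Nat.le_ceil _
      _ ≤ K := Nat.cast_le.mpr hKK₀
  have hS_lb : 4*|σ|+100 ≤ S := by nlinarith [abs_nonneg σ]
  have hσS : |σ| ≤ S/4 := by linarith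
  have hS100 : 100 ≤ S := by linarith [abs_nonneg σ]
  have hSK : 100 * S ≤ K := by nlinarith
  have hK104 : (10000:ℝ) ≤ K := by nlinarith [abs_nonneg σ]
  have hSK' : S ≤ (K:ℝ)/100 := by linarith
  have hσ_lb : -(S/4) ≤ σ := by have := neg_abs_le σ; linarith
  have hσ_ub : σ ≤ S/4 := by have := le_abs_self σ; linarith
  have hL1 : (1:ℝ) ≤ (L:ℝ) := by exact_mod_cast hL
  have hM1 : 1 ≤ M := by rw [hMdef]; nlinarith
  have hMS : M ≤ S := by
    rw [hSdef, Real.sqrt_eq_rpow]; exact hL2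
  have hτK : |τ| ≤ (K:ℝ) := le_trans hτ (by
    rw [div_le_iff₀ (by linarith : (0:ℝ) < (L:ℝ))]; nlinarith [hK0])
  -- the key real parameters
  set x : ℝ := ((K:ℝ) - M + σ - 1)/2 with hxdef
  set y : ℝ := (K:ℝ) - M/2 - 1 with hydef
  have hx2 : (K:ℝ) - 2*S ≤ 2*x := by rw [hxdef]; linarith
  have hx49 : 49/100*(K:ℝ) ≤ x := by linarith
  have hx1 : 1 ≤ x := by linarith
  have hx_pos : 0 < x := by linarith
  have hx_ub : x ≤ K := by rw [hxdef]; linarith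
  have hy_pos : 0 < y := by rw [hydef]; linarith
  -- exponent bookkeeping
  have hσn : σ ≤ n := Nat.le_ceil σ
  have hn_ub : (n:ℝ) ≤ |σ| + 1 := by
    rcases le_or_gt σ 0 with h|h
    · rw [hn, Nat.ceil_eq_zero.mpr h]; simp; positivity
    · have := Nat.ceil_lt_add_one h.le
      have h2 := le_abs_self σ
      push_cast at this ⊢
      linarith
  set β : ℝ := (n:ℝ) - σ with hβdef
  have hβ0 : 0 ≤ β := by rw [hβdef]; linarith
  set b : ℕ := ⌊β⌋₊ with hbdef
  set δ : ℝ := β - b with hδdef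
  have hδ0 : 0 ≤ δ := by rw [hδdef]; have := Nat.floor_le hβ0; linarith
  have hδ1 : δ ≤ 1 := by
    rw [hδdef]; have := Nat.lt_floor_add_one β; linarith
  set N : ℕ := m + 1 + b with hNdef
  set A : ℝ := M + 1 - σ + n with hAdef
  have hA_pos : 0 < A := by rw [hAdef]; linarith
  have hxA : x + A = (x + δ) + (N:ℕ) := by
    rw [hAdef, hδdef, hβdef, hNdef]; push_cast [hMcast.symm]; ring
  -- complex quantities
  set s : ℂ := (σ:ℂ) + (τ:ℂ) * Complex.I with hsdef
  set z : ℂ := ((K : ℂ) - (L : ℂ) ^ 2 + s - 1) / 2 with hzdef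
  set w : ℂ := ((K : ℂ) + (L : ℂ) ^ 2 - s + 1) / 2 with hwdef
  set xw : ℝ := ((K:ℝ) + M - σ + 1)/2 with hxwdef
  have hz_eq : z = (x:ℂ) + ((τ/2 : ℝ):ℂ) * Complex.I := by
    rw [hzdef, hsdef, hxdef, hMdef]; push_cast; ring
  have hw_eq : w = (xw:ℂ) + ((-τ/2 : ℝ):ℂ) * Complex.I := by
    rw [hwdef, hsdef, hxwdef, hMdef]; push_cast; ring
  have hz_re : z.re = x := by rw [hz_eq]; simp
  have hw_re : w.re = xw := by rw [hw_eq]; simp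
  have hxw_pos : 0 < xw := by rw [hxwdef]; linarith
  have hxw_ub : xw ≤ (K:ℝ) := by rw [hxwdef]; linarith
  have hconj : w + (n:ℂ) = (starRingEnd ℂ) (z + (A:ℂ)) := by
    rw [hz_eq, hw_eq]
    simp only [map_add, map_mul, Complex.conj_ofReal, Complex.conj_I]
    rw [hxwdef, hAdef, hxdef]
    push_cast
    ring
  -- Gamma manipulation: |Γ(w+n)| = |Γ(z+A)|
  have habs_wn : ‖Complex.Gamma (w + n)‖ = ‖Complex.Gamma (z + (A:ℂ))‖ := by
    rw [hconj, Complex.Gamma_conj, Complex.norm_conj]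
  set P : ℂ := ∏ k ∈ Finset.range n, (w + k) with hPdef
  have hGwn : Complex.Gamma (w + n) = Complex.Gamma w * P :=
    Complex_Gamma_nat_shift w (by rw [hw_re]; exact hxw_pos) n
  set W : ℝ := ‖w‖ + n with hWdef
  have hW0 : 0 ≤ W := by rw [hWdef]; positivity
  have habsP : ‖P‖ ≤ W ^ n := by
    rw [hPdef, norm_prod]
    calc (∏ k ∈ Finset.range n, ‖w + k‖)
        ≤ ∏ k ∈ Finset.range n, W := by
          refine Finset.prod_le_prod (fun k _ => norm_nonneg _) (fun k hk => ?_)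
          rw [hWdef]
          calc ‖w + k‖ ≤ ‖w‖ + ‖(k:ℂ)‖ := norm_add_le _ _
            _ ≤ ‖w‖ + n := by
                simp only [Complex.norm_natCast]
                have : (k:ℝ) ≤ n := by exact_mod_cast (Finset.mem_range.mp hk).le
                linarith
      _ = W ^ n := by rw [Finset.prod_const, Finset.card_range]
  have hGw_ne : Complex.Gamma w ≠ 0 := Complex.Gamma_ne_zero_of_re_pos (by rw [hw_re]; exact hxw_pos)
  have hGzA_pos : 0 < ‖Complex.Gamma (z + (A:ℂ))‖ := by
    rw [norm_pos_iff]
    refine Complex.Gamma_ne_zero_of_re_pos ?_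
    simp [hz_re, Complex.add_re]
    linarith [hz_re, hA_pos]
  -- key complex inequality
  have hlem := abs_Gamma_mul_le z (by rw [hz_re]; exact hx_pos) A hA_pos
  rw [hz_re] at hlem
  have hGx_pos : 0 < Real.Gamma x := Real.Gamma_pos_of_pos hx_pos
  have hGxA_pos : 0 < Real.Gamma (x + A) := Real.Gamma_pos_of_pos (by linarith)
  -- T := |Γ z / Γ w| bound
  have habsGw : ‖Complex.Gamma w‖ * ‖P‖
      = ‖Complex.Gamma (z + (A:ℂ))‖ := by
    rw [← norm_mul, ← hGwn, habs_wn]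
  have hP_pos : 0 < ‖P‖ := by
    by_contra h
    push_neg at h
    have h0 : ‖P‖ = 0 := le_antisymm h (norm_nonneg _)
    rw [h0, mul_zero] at habsGw
    exact absurd habsGw.symm (ne_of_gt hGzA_pos)
  have hT : ‖Complex.Gamma z / Complex.Gamma w‖ ≤
      Real.Gamma x / Real.Gamma (x + A) * W ^ n := by
    rw [norm_div]
    have hGw_pos : 0 < ‖Complex.Gamma w‖ := by
      rw [norm_pos_iff]; exact hGw_ne
    rw [div_le_iff₀ hGw_pos]
    -- suffices: |Γz| * |P| ≤ (Γx/Γ(x+A) * W^n) * (|Γw| * |P|)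
    have goal2 : ‖Complex.Gamma z‖ * ‖P‖ ≤
        (Real.Gamma x / Real.Gamma (x + A) * W ^ n) * (‖Complex.Gamma w‖ * ‖P‖) := by
      rw [habsGw]
      calc ‖Complex.Gamma z‖ * ‖P‖
          ≤ ‖Complex.Gamma z‖ * W ^ n :=
            mul_le_mul_of_nonneg_left habsP (norm_nonneg _)
        _ ≤ (Real.Gamma x / Real.Gamma (x + A) * ‖Complex.Gamma (z + (A:ℂ))‖) * W ^ n := by
            refine mul_le_mul_of_nonneg_right ?_ (by positivity)
            rw [div_mul_eq_mul_div, le_div_iff₀ hGxA_pos]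
            linarith [hlem]
        _ = (Real.Gamma x / Real.Gamma (x + A) * W ^ n) * ‖Complex.Gamma (z + (A:ℂ))‖ := by
            ring
    refine le_of_mul_le_mul_right ?_ hP_pos
    calc ‖Complex.Gamma z‖ * ‖P‖
        ≤ Real.Gamma x / Real.Gamma (x + A) * W ^ n * (‖Complex.Gamma w‖ * ‖P‖) := goal2
      _ = Real.Gamma x / Real.Gamma (x + A) * W ^ n * ‖Complex.Gamma w‖ * ‖P‖ := by ring

  -- Real Gamma ratio for x
  have hGxδ_pos : 0 < Real.Gamma (x + δ) := Real.Gamma_pos_of_pos (by linarith only [hx1, hδ0])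
  have hGshift : Real.Gamma (x + A) = Real.Gamma (x+δ) * ∏ j ∈ Finset.range N, (x+δ+j) := by
    rw [hxA]; exact Gamma_nat_shift (x+δ) (by linarith only [hx1, hδ0]) N
  have hprodN : (x:ℝ)^(N:ℕ) ≤ ∏ j ∈ Finset.range N, (x+δ+j) := by
    calc (x:ℝ)^(N:ℕ) = ∏ _j ∈ Finset.range N, x := by
          rw [Finset.prod_const, Finset.card_range]
      _ ≤ ∏ j ∈ Finset.range N, (x+δ+j) := by
          refine Finset.prod_le_prod (fun j _ => hx_pos.le) (fun j _ => ?_)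
          have : (0:ℝ) ≤ δ + j := by positivity
          linarith
  have hG1 := Gamma_gautschi_lower hx1 hδ0 hδ1
  have hGratio : Real.Gamma x * (x ^ δ * x^(N:ℕ)) ≤ 2 * Real.Gamma (x+A) := by
    rw [hGshift]
    calc Real.Gamma x * (x^δ * x^(N:ℕ)) = (Real.Gamma x * x^δ) * x^(N:ℕ) := by ring
      _ ≤ (2*Real.Gamma (x+δ)) * x^(N:ℕ) :=
          mul_le_mul_of_nonneg_right hG1 (by positivity)
      _ ≤ (2*Real.Gamma (x+δ)) * ∏ j ∈ Finset.range N, (x+δ+j) :=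
          mul_le_mul_of_nonneg_left hprodN (by positivity)
      _ = 2 * (Real.Gamma (x+δ) * ∏ j ∈ Finset.range N, (x+δ+j)) := by ring
  -- duplication formula and prefactor bound
  have hGu1_pos : 0 < Real.Gamma (M/2+1) := Real.Gamma_pos_of_pos (by linarith only [hM1])
  have hGuh_pos : 0 < Real.Gamma (M/2+1/2) := Real.Gamma_pos_of_pos (by linarith only [hM1])
  have hGM1_pos : 0 < Real.Gamma (M+1) := Real.Gamma_pos_of_pos (by linarith only [hM1])
  have hGy_pos : 0 < Real.Gamma y := Real.Gamma_pos_of_pos hy_pos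
  have hdup : Real.Gamma (M/2+1/2) * Real.Gamma (M/2+1)
      = Real.Gamma (M+1) * (2:ℝ)^(-M) * Real.sqrt π := by
    have h := Real.Gamma_mul_Gamma_add_half (M/2+1/2)
    rw [show M/2+1/2+1/2 = M/2+1 by ring, show 2*(M/2+1/2) = M+1 by ring,
      show (1:ℝ)-(M+1) = -M by ring] at h
    exact h
  have hG2 : Real.Gamma (M/2+1) ≤ Real.Gamma (M/2+1/2) * Real.sqrt (M/2+1/2) :=
    Gamma_half_upper (by linarith only [hM1] : (0:ℝ) < M/2)
  have hsqrtL : Real.sqrt (M/2+1/2) ≤ (L:ℝ) := by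
    have h1 : Real.sqrt (M/2+1/2) ≤ Real.sqrt M := Real.sqrt_le_sqrt (by linarith only [hM1])
    have h2 : Real.sqrt M = (L:ℝ) := by rw [hMdef]; exact Real.sqrt_sq (by positivity)
    linarith
  have hGKu : Real.Gamma ((K:ℝ)+M/2) = Real.Gamma y * ∏ j ∈ Finset.range (m+1), (y+j) := by
    have h := Gamma_nat_shift y hy_pos (m+1)
    rw [show y + ((m+1:ℕ):ℝ) = (K:ℝ)+M/2 by push_cast [hMcast]; rw [hydef]; ring] at h
    exact h
  have hProd_nonneg : 0 ≤ ∏ j ∈ Finset.range (m+1), (y+j) :=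
    Finset.prod_nonneg (fun j _ => by positivity)
  have hProd : ∏ j ∈ Finset.range (m+1), (y+j) ≤ (y+M)^(m+1) := by
    calc ∏ j ∈ Finset.range (m+1), (y+j) ≤ ∏ _j ∈ Finset.range (m+1), (y+M) := by
          refine Finset.prod_le_prod (fun j _ => by positivity) (fun j hj => ?_)
          have h1 : (j:ℝ) ≤ (m:ℝ) := by
            exact_mod_cast Nat.lt_succ_iff.mp (Finset.mem_range.mp hj)
          rw [← hMcast]; linarith
      _ = (y+M)^(m+1) := by rw [Finset.prod_const, Finset.card_range]
  have h2Mpos : (0:ℝ) < (2:ℝ)^(-M) := Real.rpow_pos_of_pos two_pos _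
  have hR : Real.Gamma (M/2+1)^2 * Real.Gamma ((K:ℝ)+M/2) / (Real.Gamma (M+1) * Real.Gamma y)
      ≤ Real.sqrt π * (2:ℝ)^(-M) * (L:ℝ) * (y+M)^(m+1) := by
    rw [div_le_iff₀ (by positivity)]
    calc Real.Gamma (M/2+1)^2 * Real.Gamma ((K:ℝ)+M/2)
        = Real.Gamma (M/2+1) * Real.Gamma (M/2+1) *
            (Real.Gamma y * ∏ j ∈ Finset.range (m+1), (y+j)) := by rw [hGKu]; ring
      _ ≤ (Real.Gamma (M/2+1/2) * Real.sqrt (M/2+1/2)) * Real.Gamma (M/2+1) *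
            (Real.Gamma y * (y+M)^(m+1)) := by
          refine mul_le_mul (mul_le_mul_of_nonneg_right hG2 hGu1_pos.le)
            (mul_le_mul_of_nonneg_left hProd hGy_pos.le) (by positivity) (by positivity)
      _ = (Real.Gamma (M/2+1/2) * Real.Gamma (M/2+1)) * Real.sqrt (M/2+1/2) *
            (Real.Gamma y * (y+M)^(m+1)) := by ring
      _ = (Real.Gamma (M+1) * (2:ℝ)^(-M) * Real.sqrt π) * Real.sqrt (M/2+1/2) *
            (Real.Gamma y * (y+M)^(m+1)) := by rw [hdup]
      _ ≤ (Real.Gamma (M+1) * (2:ℝ)^(-M) * Real.sqrt π) * (L:ℝ) *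
            (Real.Gamma y * (y+M)^(m+1)) := by
          refine mul_le_mul_of_nonneg_right (mul_le_mul_of_nonneg_left hsqrtL ?_) (by positivity)
          positivity
      _ = Real.sqrt π * (2:ℝ)^(-M) * (L:ℝ) * (y+M)^(m+1) * (Real.Gamma (M+1) * Real.Gamma y) := by
          ring
  -- numeric bounds
  have hS_pos : (0:ℝ) < S := by linarith only [hS100]
  have hyM_nonneg : (0:ℝ) ≤ y + M := by linarith only [hy_pos, hM1]
  have hyM2x : y + M ≤ 2*x + 6*x/S := by
    have h6 : 2*S ≤ 6*x/S := by
      rw [le_div_iff₀ hS_pos]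
      have h2K : 2*((K:ℝ)) ≤ 6*x := by linarith only [hx49, hK104]
      clear_value S x
      linarith only [h2K, hS2]
    have h7 : y + M - 2*x ≤ 2*S := by
      rw [hydef, hxdef]; linarith only [hMS, hσ_lb, hσ_ub, hS100]
    clear_value S x y
    linarith only [h6, h7]
  have hmS : (m:ℝ) ≤ S := by rw [hMcast]; exact hMS
  have hexp4 : (1+3/S)^(m+1) ≤ Real.exp 4 := by
    have h1 : (1+3/S) ≤ Real.exp (3/S) := by
      have := Real.add_one_le_exp (3/S); linarith
    calc (1+3/S)^(m+1) ≤ (Real.exp (3/S))^(m+1) := pow_le_pow_left₀ (by positivity) h1 _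
      _ = Real.exp (((m+1:ℕ):ℝ)*(3/S)) := (Real.exp_nat_mul _ _).symm
      _ ≤ Real.exp 4 := by
          refine Real.exp_le_exp.mpr ?_
          rw [mul_div_assoc', div_le_iff₀ hS_pos]
          push_cast
          linarith only [hmS, hS100]
  have hyMpow : (y+M)^(m+1) ≤ (2*x)^(m+1) * Real.exp 4 := by
    calc (y+M)^(m+1) ≤ (2*x + 6*x/S)^(m+1) := pow_le_pow_left₀ hyM_nonneg hyM2x _
      _ = (2*x)^(m+1) * (1+3/S)^(m+1) := by
          rw [← mul_pow]; congr 1; field_simp; ring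
      _ ≤ (2*x)^(m+1) * Real.exp 4 := mul_le_mul_of_nonneg_left hexp4 (by positivity)
  have hWx : W ≤ 5*x := by
    have habsw : ‖w‖ ≤ xw + |τ|/2 := by
      rw [hw_eq]
      refine (norm_add_le _ _).trans ?_
      rw [norm_mul, Complex.norm_I, Complex.norm_real, Complex.norm_real, mul_one, Real.norm_eq_abs, Real.norm_eq_abs]
      have h1 : |xw| = xw := abs_of_pos hxw_pos
      have h2 : |(-τ/2)| = |τ|/2 := by rw [neg_div, abs_neg, abs_div]; norm_num
      linarith only [le_of_eq h1, le_of_eq h2]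
    have hnS : (n:ℝ) ≤ S := by linarith only [hn_ub, hσS, hS100]
    rw [hWdef]
    linarith only [habsw, hxw_ub, hτK, hnS, hSK', hx49]
  have hWpow : W^n ≤ (5*x)^n := pow_le_pow_left₀ hW0 hWx n
  have h2M : (2:ℝ)^(-M) * (2:ℝ)^(m+1 : ℕ) = 2 := by
    rw [← Real.rpow_natCast 2 (m+1), ← Real.rpow_add two_pos]
    rw [show -M + ((m+1:ℕ):ℝ) = 1 by push_cast [hMcast]; ring]
    exact Real.rpow_one 2
  have hxpow_split : x^σ * (x^δ * x^(N:ℕ)) = x^(m+1 : ℕ) * x^(n : ℕ) := by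
    rw [← Real.rpow_natCast x N, ← Real.rpow_natCast x (m+1), ← Real.rpow_natCast x n,
      ← Real.rpow_add hx_pos, ← Real.rpow_add hx_pos, ← Real.rpow_add hx_pos]
    congr 1
    rw [hδdef, hβdef, hNdef]
    push_cast
    ring
  set D : ℝ := x^δ * x^(N:ℕ) with hDdef
  have hD_pos : 0 < D := by
    rw [hDdef]; positivity
  have hKEY : (2:ℝ)^(-M) * (y+M)^(m+1) * W^n * 2 ≤ 4*Real.exp 4 * 5^n * (x^σ * D) := by
    calc (2:ℝ)^(-M) * (y+M)^(m+1) * W^n * 2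
        ≤ (2:ℝ)^(-M) * ((2*x)^(m+1) * Real.exp 4) * (5*x)^n * 2 := by
          refine mul_le_mul_of_nonneg_right ?_ (by norm_num)
          refine mul_le_mul (mul_le_mul_of_nonneg_left hyMpow h2Mpos.le) hWpow
            (by positivity) (by positivity)
      _ = ((2:ℝ)^(-M) * (2:ℝ)^(m+1:ℕ)) * (x^(m+1:ℕ) * x^(n:ℕ)) * Real.exp 4 * 5^n * 2 := by
          rw [mul_pow 2 x, mul_pow 5 x]; ring
      _ = 4*Real.exp 4 * 5^n * (x^(m+1:ℕ) * x^(n:ℕ)) := by rw [h2M]; ring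
      _ = 4*Real.exp 4 * 5^n * (x^σ * D) := by rw [hDdef, hxpow_split]
  have hxσ : x^σ ≤ c3 * (K:ℝ)^σ := by
    have hKσ_nonneg : (0:ℝ) ≤ (K:ℝ)^σ := Real.rpow_nonneg hK0 σ
    rcases le_or_gt 0 σ with h|h
    · have h1 : x^σ ≤ (K:ℝ)^σ := Real.rpow_le_rpow hx_pos.le hx_ub h
      have h2 : (1:ℝ) ≤ c3 := le_max_left _ _
      calc x^σ ≤ (K:ℝ)^σ := h1
        _ ≤ c3 * (K:ℝ)^σ := le_mul_of_one_le_left hKσ_nonneg h2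
    · have h1 : x^σ ≤ ((49/100)*(K:ℝ))^σ := by
        refine Real.rpow_le_rpow_of_nonpos ?_ hx49 h.le
        positivity
      rw [Real.mul_rpow (by norm_num) hK0] at h1
      have h2 : (49/100:ℝ)^σ ≤ c3 := le_max_right _ _
      calc x^σ ≤ (49/100:ℝ)^σ * (K:ℝ)^σ := h1
        _ ≤ c3 * (K:ℝ)^σ := mul_le_mul_of_nonneg_right h2 hKσ_nonneg
  -- assemble everything
  have hT2 : Real.Gamma x / Real.Gamma (x + A) ≤ 2 / D := by
    rw [div_le_div_iff₀ hGxA_pos hD_pos]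
    linarith only [hGratio]
  have hRb_nonneg : (0:ℝ) ≤ Real.sqrt π * (2:ℝ)^(-M) * (L:ℝ) * (y+M)^(m+1) := by positivity
  have hR_nonneg : (0:ℝ) ≤ Real.Gamma (M/2+1)^2 * Real.Gamma ((K:ℝ)+M/2) /
      (Real.Gamma (M+1) * Real.Gamma y) := by positivity
  rw [norm_mul, norm_mul]
  have habs1 : ‖(2*(π:ℂ)) ^ (-s - 1)‖ = c1 := by
    rw [show (2*(π:ℂ)) = ((2*π:ℝ):ℂ) by push_cast; ring,
      Complex.norm_cpow_eq_rpow_re_of_pos hπ]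
    congr 1
    rw [hsdef]
    simp
  have habs2 : ‖((Real.Gamma (M/2+1)^2 * Real.Gamma ((K:ℝ)+M/2) /
      (Real.Gamma (M+1) * Real.Gamma y) : ℝ) : ℂ)‖ = Real.Gamma (M/2+1)^2 * Real.Gamma ((K:ℝ)+M/2) /
      (Real.Gamma (M+1) * Real.Gamma y) := by
    rw [Complex.norm_real, Real.norm_eq_abs]; exact abs_of_nonneg hR_nonneg
  rw [habs1, habs2]
  have hTn : (0:ℝ) ≤ ‖Complex.Gamma z / Complex.Gamma w‖ := norm_nonneg _
  calc c1 * (Real.Gamma (M/2+1)^2 * Real.Gamma ((K:ℝ)+M/2) /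
      (Real.Gamma (M+1) * Real.Gamma y)) * ‖Complex.Gamma z / Complex.Gamma w‖
      ≤ c1 * (Real.sqrt π * (2:ℝ)^(-M) * (L:ℝ) * (y+M)^(m+1)) *
        (Real.Gamma x / Real.Gamma (x + A) * W ^ n) := by
        refine mul_le_mul (mul_le_mul_of_nonneg_left hR hc1pos.le) hT hTn (by positivity)
    _ ≤ c1 * (Real.sqrt π * (2:ℝ)^(-M) * (L:ℝ) * (y+M)^(m+1)) * (2 / D * W ^ n) := by
        refine mul_le_mul_of_nonneg_left (mul_le_mul_of_nonneg_right hT2 (by positivity)) ?_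
        positivity
    _ = c1 * Real.sqrt π * (L:ℝ) * ((2:ℝ)^(-M) * (y+M)^(m+1) * W^n * 2) / D := by
        ring
    _ ≤ c1 * Real.sqrt π * (L:ℝ) * (4*Real.exp 4 * 5^n * (x^σ * D)) / D := by
        refine div_le_div_of_nonneg_right ?_ hD_pos.le
        refine mul_le_mul_of_nonneg_left hKEY (by positivity)
    _ = c1 * Real.sqrt π * (L:ℝ) * (4*Real.exp 4 * 5^n) * x^σ := by
        field_simp
    _ ≤ c1 * Real.sqrt π * (L:ℝ) * (4*Real.exp 4 * 5^n) * (c3 * (K:ℝ)^σ) := by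
        refine mul_le_mul_of_nonneg_left hxσ (by positivity)
    _ = c1 * Real.sqrt π * 4 * Real.exp 4 * 5^n * c3 * (K:ℝ)^σ * (L:ℝ) := by ring
end
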